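/- arXiv:2509.21809 — 2 statements merged into one kernel-verified Lean document; each statement's English description precedes it below -/
import Mathlib

section
/- An almost paracontact metric Walker structure on ℝ³ is η-Einstein — i.e. there exist smooth nowhere-vanishing functions a, b : ℝ³ → ℝ such that ρ(∂i,∂j) = a·g(∂i,∂j) + b·η(∂i)η(∂j) for all coordinate fields at every point — if and only if ξ₃ ≡ 0, f_xy² − f_xx f_yy ≡ 0, f_xx vanishes nowhere, and either (ξ₂ ≡ 1 and ξ₁ = −f_xy/f_xx) or (ξ₂ ≡ −1 and ξ₁ = f_xy/f_xx). Moreover, in that case necessarily a = −b = (1/2)f_xx, and ξ is an eigenvector of the Ricci operator Q for the eigenvalue 0 (Qξ = 0). (Theorem 5.1.) -/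
open Real

/-- Points of the Walker manifold `M = ℝ³` with coordinates `(x,y,z)`. -/
abbrev Pt : Type := ℝ × ℝ × ℝ

/-- Vector fields on `ℝ³`, given by their components in the frame `∂x, ∂y, ∂z`. -/
abbrev VF : Type := Pt → Pt

/-- Partial derivative ∂/∂x. -/
noncomputable def pdx (F : Pt → ℝ) (p : Pt) : ℝ := fderiv ℝ F p ((1:ℝ), (0:ℝ), (0:ℝ))

/-- Partial derivative ∂/∂y. -/
noncomputable def pdy (F : Pt → ℝ) (p : Pt) : ℝ := fderiv ℝ F p ((0:ℝ), (1:ℝ), (0:ℝ))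

/-- Partial derivative ∂/∂z. -/
noncomputable def pdz (F : Pt → ℝ) (p : Pt) : ℝ := fderiv ℝ F p ((0:ℝ), (0:ℝ), (1:ℝ))

/-- Directional derivative of a scalar function along a vector field. -/
noncomputable def dd (X : VF) (F : Pt → ℝ) (p : Pt) : ℝ := fderiv ℝ F p (X p)

/-- Components of a tangent vector. -/
def c1 (v : Pt) : ℝ := v.1
def c2 (v : Pt) : ℝ := v.2.1
def c3 (v : Pt) : ℝ := v.2.2

/-- The coordinate vector fields `∂x, ∂y, ∂z`. -/
noncomputable def E : Fin 3 → VF :=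
  ![fun _ => ((1:ℝ), (0:ℝ), (0:ℝ)), fun _ => ((0:ℝ), (1:ℝ), (0:ℝ)),
    fun _ => ((0:ℝ), (0:ℝ), (1:ℝ))]

/-- The Walker metric with `ε = 1`: `g(∂x,∂z) = g(∂z,∂x) = 1`, `g(∂y,∂y) = 1`,
`g(∂z,∂z) = f`, all other components zero. -/
noncomputable def gm (f : Pt → ℝ) (X Y : VF) (p : Pt) : ℝ :=
  c1 (X p) * c3 (Y p) + c3 (X p) * c1 (Y p) + c2 (X p) * c2 (Y p)
    + f p * c3 (X p) * c3 (Y p)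

/-- The Levi-Civita connection of the Walker metric:
`∇_{∂x}∂z = ∇_{∂z}∂x = (1/2) f_x ∂x`, `∇_{∂y}∂z = ∇_{∂z}∂y = (1/2) f_y ∂x`,
`∇_{∂z}∂z = (1/2)(f f_x + f_z) ∂x - (1/2) f_y ∂y - (1/2) f_x ∂z`, all other covariant
derivatives of coordinate fields zero, extended by `C^∞`-linearity below and the
Leibniz rule above. -/
noncomputable def cov (f : Pt → ℝ) (X Y : VF) : VF := fun p =>
  ( dd X (fun q => c1 (Y q)) p
      + (1/2) * pdx f p * (c1 (X p) * c3 (Y p) + c3 (X p) * c1 (Y p))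
      + (1/2) * pdy f p * (c2 (X p) * c3 (Y p) + c3 (X p) * c2 (Y p))
      + (1/2) * (f p * pdx f p + pdz f p) * (c3 (X p) * c3 (Y p)),
    dd X (fun q => c2 (Y q)) p - (1/2) * pdy f p * (c3 (X p) * c3 (Y p)),
    dd X (fun q => c3 (Y q)) p - (1/2) * pdx f p * (c3 (X p) * c3 (Y p)) )

/-- Lie bracket of vector fields on `ℝ³`. -/
noncomputable def brk (X Y : VF) : VF := fun p =>
  ( dd X (fun q => c1 (Y q)) p - dd Y (fun q => c1 (X q)) p,
    dd X (fun q => c2 (Y q)) p - dd Y (fun q => c2 (X q)) p,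
    dd X (fun q => c3 (Y q)) p - dd Y (fun q => c3 (X q)) p )

/-- The `(1,1)`-tensor `φ` of the almost paracontact metric Walker structure:
`φ∂x = -ξ₂∂x + ξ₃∂y`, `φ∂y = (ξ₁ + fξ₃)∂x - ξ₃∂z`, `φ∂z = -fξ₂∂x - ξ₁∂y + ξ₂∂z`. -/
noncomputable def phiV (f ξ₁ ξ₂ ξ₃ : Pt → ℝ) (X : VF) : VF := fun p =>
  ( -ξ₂ p * c1 (X p) + (ξ₁ p + f p * ξ₃ p) * c2 (X p) - f p * ξ₂ p * c3 (X p),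
    ξ₃ p * c1 (X p) - ξ₁ p * c3 (X p),
    -ξ₃ p * c2 (X p) + ξ₂ p * c3 (X p) )

/-- The 1-form `η = ξ₃ dx + ξ₂ dy + (ξ₁ + fξ₃) dz`. -/
noncomputable def etaV (f ξ₁ ξ₂ ξ₃ : Pt → ℝ) (X : VF) (p : Pt) : ℝ :=
  ξ₃ p * c1 (X p) + ξ₂ p * c2 (X p) + (ξ₁ p + f p * ξ₃ p) * c3 (X p)

/-- The structure tensor `F(X,Y,Z) = g((∇_X φ)Y, Z)`, `(∇_X φ)Y = ∇_X(φY) - φ(∇_X Y)`. -/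
noncomputable def Ften (f ξ₁ ξ₂ ξ₃ : Pt → ℝ) (X Y Z : VF) (p : Pt) : ℝ :=
  gm f (fun q => cov f X (phiV f ξ₁ ξ₂ ξ₃ Y) q - phiV f ξ₁ ξ₂ ξ₃ (cov f X Y) q) Z p

/-- The fundamental 2-form `Φ(X,Y) = g(φX, Y)`. -/
noncomputable def Phi2 (f ξ₁ ξ₂ ξ₃ : Pt → ℝ) (X Y : VF) : Pt → ℝ :=
  gm f (phiV f ξ₁ ξ₂ ξ₃ X) Y

/-- `dη(∂i,∂j) = (1/2)(∂i(η(∂j)) - ∂j(η(∂i)))` on coordinate fields. -/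
noncomputable def deta (f ξ₁ ξ₂ ξ₃ : Pt → ℝ) (i j : Fin 3) (p : Pt) : ℝ :=
  (1/2) * (dd (E i) (etaV f ξ₁ ξ₂ ξ₃ (E j)) p - dd (E j) (etaV f ξ₁ ξ₂ ξ₃ (E i)) p)

/-- `dη(X,Y) = (1/2)(X(η(Y)) - Y(η(X)) - η([X,Y]))` on general vector fields. -/
noncomputable def detaB (f ξ₁ ξ₂ ξ₃ : Pt → ℝ) (X Y : VF) (p : Pt) : ℝ :=
  (1/2) * (dd X (etaV f ξ₁ ξ₂ ξ₃ Y) p - dd Y (etaV f ξ₁ ξ₂ ξ₃ X) p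
    - etaV f ξ₁ ξ₂ ξ₃ (brk X Y) p)

/-- The Nijenhuis tensor `N(X,Y) = φ²[X,Y] + [φX,φY] - φ[φX,Y] - φ[X,φY]`. -/
noncomputable def nij (f ξ₁ ξ₂ ξ₃ : Pt → ℝ) (X Y : VF) : VF := fun p =>
  phiV f ξ₁ ξ₂ ξ₃ (phiV f ξ₁ ξ₂ ξ₃ (brk X Y)) p
    + brk (phiV f ξ₁ ξ₂ ξ₃ X) (phiV f ξ₁ ξ₂ ξ₃ Y) p
    - phiV f ξ₁ ξ₂ ξ₃ (brk (phiV f ξ₁ ξ₂ ξ₃ X) Y) p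
    - phiV f ξ₁ ξ₂ ξ₃ (brk X (phiV f ξ₁ ξ₂ ξ₃ Y)) p

/-- The curvature tensor, with the paper's sign convention
`R(X,Y)Z = ∇_{[X,Y]}Z - ∇_X∇_Y Z + ∇_Y∇_X Z`. -/
noncomputable def Rop (f : Pt → ℝ) (X Y Z : VF) : VF := fun p =>
  cov f (brk X Y) Z p - cov f X (cov f Y Z) p + cov f Y (cov f X Z) p

/-- Second partial derivatives of `f`. -/
noncomputable def fxx (f : Pt → ℝ) : Pt → ℝ := pdx (pdx f)
noncomputable def fxy (f : Pt → ℝ) : Pt → ℝ := pdy (pdx f)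
noncomputable def fyy (f : Pt → ℝ) : Pt → ℝ := pdy (pdy f)

/-- The Ricci tensor of the Walker metric: `ρ(∂x,∂z) = ρ(∂z,∂x) = (1/2) f_xx`,
`ρ(∂y,∂z) = ρ(∂z,∂y) = (1/2) f_xy`, `ρ(∂z,∂z) = (1/2)(f f_xx - f_yy)`, all other
components zero, extended tensorially. -/
noncomputable def rhoT (f : Pt → ℝ) (X Y : VF) (p : Pt) : ℝ :=
  (1/2) * fxx f p * (c1 (X p) * c3 (Y p) + c3 (X p) * c1 (Y p))
    + (1/2) * fxy f p * (c2 (X p) * c3 (Y p) + c3 (X p) * c2 (Y p))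
    + (1/2) * (f p * fxx f p - fyy f p) * (c3 (X p) * c3 (Y p))

/-- The Ricci operator: `Q∂x = (1/2)f_xx ∂x`, `Q∂y = (1/2)f_xy ∂x`,
`Q∂z = -(1/2)f_yy ∂x + (1/2)f_xy ∂y + (1/2)f_xx ∂z`. -/
noncomputable def Qop (f : Pt → ℝ) (X : VF) : VF := fun p =>
  ( (1/2) * fxx f p * c1 (X p) + (1/2) * fxy f p * c2 (X p) - (1/2) * fyy f p * c3 (X p),
    (1/2) * fxy f p * c3 (X p),
    (1/2) * fxx f p * c3 (X p) )

/-- `dΦ(∂x,∂y,∂z) = ∂x(Φ(∂y,∂z)) - ∂y(Φ(∂x,∂z)) + ∂z(Φ(∂x,∂y))`. -/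
noncomputable def dPhi (f ξ₁ ξ₂ ξ₃ : Pt → ℝ) (p : Pt) : ℝ :=
  pdx (Phi2 f ξ₁ ξ₂ ξ₃ (E 1) (E 2)) p - pdy (Phi2 f ξ₁ ξ₂ ξ₃ (E 0) (E 2)) p
    + pdz (Phi2 f ξ₁ ξ₂ ξ₃ (E 0) (E 1)) p

/-- `(η∧Φ)(∂x,∂y,∂z) = η(∂x)Φ(∂y,∂z) - η(∂y)Φ(∂x,∂z) + η(∂z)Φ(∂x,∂y)`. -/
noncomputable def etaWedgePhi (f ξ₁ ξ₂ ξ₃ : Pt → ℝ) (p : Pt) : ℝ :=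
  etaV f ξ₁ ξ₂ ξ₃ (E 0) p * Phi2 f ξ₁ ξ₂ ξ₃ (E 1) (E 2) p
    - etaV f ξ₁ ξ₂ ξ₃ (E 1) p * Phi2 f ξ₁ ξ₂ ξ₃ (E 0) (E 2) p
    + etaV f ξ₁ ξ₂ ξ₃ (E 2) p * Phi2 f ξ₁ ξ₂ ξ₃ (E 0) (E 1) p

/-- The constant function `0`. -/
noncomputable def zeroF : Pt → ℝ := fun _ => 0
/-- The constant function `1`. -/
noncomputable def oneF : Pt → ℝ := fun _ => 1
/-- The constant function `-1`. -/
noncomputable def negOneF : Pt → ℝ := fun _ => -1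

/-- The η-Einstein condition `ρ = a·g + b·η⊗η` on coordinate fields. -/
def etaEinstein (f ξ₁ ξ₂ ξ₃ a b : Pt → ℝ) : Prop :=
  ∀ (i j : Fin 3) (p : Pt),
    rhoT f (E i) (E j) p = a p * gm f (E i) (E j) p
      + b p * etaV f ξ₁ ξ₂ ξ₃ (E i) p * etaV f ξ₁ ξ₂ ξ₃ (E j) p

/-!
The Ricci tensor of a Walker metric has no `(∂x,∂x)` and `(∂y,∂y)` components, so the
η-Einstein equations force `b ξ₃² = 0`, hence `ξ₃ = 0` and `ξ₂² = 1`; the components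
`(∂x,∂z)`, `(∂y,∂y)`, `(∂y,∂z)`, `(∂z,∂z)` are then linear in `a`, `b`, `f_xy`, `f_yy` and
determine them in turn. Since `ℝ³` is connected, the continuous function `ξ₂` with `ξ₂² = 1`
is the constant `1` or `-1`.
-/

open Set

lemma contDiff_pdx {F : Pt → ℝ} (hF : ContDiff ℝ (⊤ : ℕ∞) F) : ContDiff ℝ (⊤ : ℕ∞) (pdx F) :=
  (hF.fderiv_right le_rfl).clm_apply contDiff_const

lemma contDiff_fxx {f : Pt → ℝ} (hf : ContDiff ℝ (⊤ : ℕ∞) f) : ContDiff ℝ (⊤ : ℕ∞) (fxx f) :=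
  contDiff_pdx (contDiff_pdx hf)

/-- Here `ξ = ξ₁∂x + ξ₂∂y` is a unit vector field and the `(x,y)`-Hessian of `f` is
`f_xx · (1, -ξ₂ξ₁) ⊗ (1, -ξ₂ξ₁)`. -/
def EtaEinsteinNormalForm (f ξ₁ ξ₂ ξ₃ : Pt → ℝ) (p : Pt) : Prop :=
  ξ₃ p = 0 ∧ ξ₂ p ^ 2 = 1 ∧ fxy f p = -(fxx f p * ξ₂ p * ξ₁ p) ∧
    fyy f p = fxx f p * ξ₁ p ^ 2

section

variable {f ξ₁ ξ₂ ξ₃ a b : Pt → ℝ}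

lemma normalForm_of_etaEinstein (hb : ∀ p, b p ≠ 0)
    (hunit : ∀ p, ξ₂ p ^ 2 + f p * ξ₃ p ^ 2 + 2 * ξ₁ p * ξ₃ p = 1)
    (hEE : etaEinstein f ξ₁ ξ₂ ξ₃ a b) (p : Pt) :
    a p = (1/2) * fxx f p ∧ b p = -((1/2) * fxx f p) ∧ EtaEinsteinNormalForm f ξ₁ ξ₂ ξ₃ p := by
  have e00 := hEE 0 0 p
  have e02 := hEE 0 2 p
  have e11 := hEE 1 1 p
  have e12 := hEE 1 2 p
  have e22 := hEE 2 2 p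
  simp only [rhoT, gm, etaV, E, c1, c2, c3, Fin.isValue, Matrix.cons_val', Matrix.cons_val,
    Matrix.cons_val_fin_one, Matrix.cons_val_zero, Matrix.cons_val_one, one_div, mul_zero, mul_one,
    add_zero, zero_add, zero_eq_mul, mul_eq_zero, or_self_right] at e00 e02 e11 e12 e22
  have h3 : ξ₃ p = 0 := e00.resolve_left (hb p)
  simp only [h3, mul_zero, zero_mul, add_zero] at e02 e12 e22
  have h2 : ξ₂ p ^ 2 = 1 := by linear_combination hunit p - (f p * ξ₃ p + 2 * ξ₁ p) * h3
  have ha : a p = (1/2) * fxx f p := by linear_combination -e02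
  have hb' : b p = -((1/2) * fxx f p) := by linear_combination -e11 - b p * h2 - ha
  refine ⟨ha, hb', h3, h2, ?_, ?_⟩
  · linear_combination 2 * e12 + 2 * ξ₂ p * ξ₁ p * hb'
  · linear_combination -2 * e22 - 2 * f p * ha - 2 * ξ₁ p ^ 2 * hb'

lemma etaEinstein_of_normalForm
    (hN : ∀ p, a p = (1/2) * fxx f p ∧ b p = -((1/2) * fxx f p) ∧
      EtaEinsteinNormalForm f ξ₁ ξ₂ ξ₃ p) :
    etaEinstein f ξ₁ ξ₂ ξ₃ a b := by
  intro i j p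
  obtain ⟨ha, hb, h3, h2, hxy, hyy⟩ := hN p
  fin_cases i <;> fin_cases j <;>
    simp [rhoT, gm, etaV, E, c1, c2, c3, h3, ha, hb]
  · linear_combination (fxx f p / 2) * h2
  · linear_combination hxy / 2
  · linear_combination hxy / 2
  · linear_combination (-(1:ℝ)/2) * hyy

lemma Qop_xi_eq_zero {p : Pt} (hN : EtaEinsteinNormalForm f ξ₁ ξ₂ ξ₃ p) :
    Qop f (fun q => (ξ₁ q, ξ₂ q, ξ₃ q)) p = 0 := by
  obtain ⟨h3, h2, hxy, -⟩ := hN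
  simp only [Qop, c1, c2, c3, h3, mul_zero, sub_zero, Prod.mk_eq_zero, and_true]
  linear_combination (ξ₂ p / 2) * hxy - (fxx f p * ξ₁ p / 2) * h2

end

lemma walkerConditions_iff_forall_normalForm {f ξ₁ ξ₂ ξ₃ : Pt → ℝ} (h2 : Continuous ξ₂) :
    ((∀ p : Pt, ξ₃ p = 0) ∧ (∀ p : Pt, fxy f p ^ 2 - fxx f p * fyy f p = 0) ∧
        (∀ p : Pt, fxx f p ≠ 0) ∧
        (((∀ p : Pt, ξ₂ p = 1) ∧ (∀ p : Pt, ξ₁ p = -(fxy f p / fxx f p))) ∨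
          ((∀ p : Pt, ξ₂ p = -1) ∧ (∀ p : Pt, ξ₁ p = fxy f p / fxx f p)))) ↔
      (∀ p, fxx f p ≠ 0) ∧ ∀ p, EtaEinsteinNormalForm f ξ₁ ξ₂ ξ₃ p := by
  constructor
  · rintro ⟨h3, hdet, hne, hcase⟩
    have hsigned : ∀ p, ξ₂ p ^ 2 = 1 ∧ fxy f p = -(fxx f p * ξ₂ p * ξ₁ p) := by
      intro p
      rcases hcase with ⟨hs, hx⟩ | ⟨hs, hx⟩ <;> rw [hs p, hx p] <;> field_simp [hne p] <;> norm_num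
    refine ⟨hne, fun p => ⟨h3 p, (hsigned p).1, (hsigned p).2, ?_⟩⟩
    apply mul_left_cancel₀ (hne p)
    linear_combination -hdet p + (fxy f p - fxx f p * ξ₂ p * ξ₁ p) * (hsigned p).2
      + fxx f p ^ 2 * ξ₁ p ^ 2 * (hsigned p).1
  · rintro ⟨hne, hN⟩
    refine ⟨fun p => (hN p).1, fun p => ?_, hne, ?_⟩
    · obtain ⟨-, h2p, hxy, hyy⟩ := hN p
      linear_combination (fxy f p - fxx f p * ξ₂ p * ξ₁ p) * hxy - fxx f p * hyy
        + fxx f p ^ 2 * ξ₁ p ^ 2 * h2p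
    have hconst : (∀ p, ξ₂ p = 1) ∨ ∀ p, ξ₂ p = -1 := by
      simpa [EqOn] using isPreconnected_univ.eq_one_or_eq_neg_one_of_sq_eq h2.continuousOn
        fun p _ => (hN p).2.1
    rcases hconst with hs | hs
    · refine .inl ⟨hs, fun p => ?_⟩
      have hxy := (hN p).2.2.1
      rw [hs p] at hxy
      field_simp [hne p]
      linear_combination hxy
    · refine .inr ⟨hs, fun p => ?_⟩
      have hxy := (hN p).2.2.1
      rw [hs p] at hxy
      field_simp [hne p]
      linear_combination -hxy

theorem etaEinstein_iff_general (f ξ₁ ξ₂ ξ₃ : Pt → ℝ)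
    (hf : ContDiff ℝ (⊤ : ℕ∞) f)
    (h2 : ContDiff ℝ (⊤ : ℕ∞) ξ₂)
    (hconstr : ∀ p : Pt, ξ₂ p ^ 2 + f p * ξ₃ p ^ 2 + 2 * ξ₁ p * ξ₃ p = 1) :
    ((∃ a b : Pt → ℝ, ContDiff ℝ (⊤ : ℕ∞) a ∧ ContDiff ℝ (⊤ : ℕ∞) b ∧
        (∀ p : Pt, a p ≠ 0) ∧ (∀ p : Pt, b p ≠ 0) ∧ etaEinstein f ξ₁ ξ₂ ξ₃ a b) ↔
      ((∀ p : Pt, ξ₃ p = 0) ∧ (∀ p : Pt, fxy f p ^ 2 - fxx f p * fyy f p = 0) ∧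
        (∀ p : Pt, fxx f p ≠ 0) ∧
        (((∀ p : Pt, ξ₂ p = 1) ∧ (∀ p : Pt, ξ₁ p = -(fxy f p / fxx f p))) ∨
          ((∀ p : Pt, ξ₂ p = -1) ∧ (∀ p : Pt, ξ₁ p = fxy f p / fxx f p))))) ∧
    (∀ a b : Pt → ℝ, ContDiff ℝ (⊤ : ℕ∞) a → ContDiff ℝ (⊤ : ℕ∞) b →
      (∀ p : Pt, a p ≠ 0) → (∀ p : Pt, b p ≠ 0) → etaEinstein f ξ₁ ξ₂ ξ₃ a b →
      (∀ p : Pt, a p = (1/2) * fxx f p ∧ b p = -((1/2) * fxx f p)) ∧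
      (∀ p : Pt, Qop f (fun q => (ξ₁ q, ξ₂ q, ξ₃ q)) p = 0)) := by
  rw [walkerConditions_iff_forall_normalForm h2.continuous]
  refine ⟨⟨?_, ?_⟩, ?_⟩
  · rintro ⟨a, b, -, -, ha, hb, hEE⟩
    have hN := normalForm_of_etaEinstein hb hconstr hEE
    refine ⟨fun p hfxx => ha p ?_, fun p => (hN p).2.2⟩
    rw [(hN p).1, hfxx, mul_zero]
  · rintro ⟨hne, hN⟩
    refine ⟨fun p => (1/2) * fxx f p, fun p => -((1/2) * fxx f p),
      contDiff_const.mul (contDiff_fxx hf), (contDiff_const.mul (contDiff_fxx hf)).neg,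
      fun p => by simpa using hne p, fun p => by simpa using hne p,
      etaEinstein_of_normalForm fun p => ⟨rfl, rfl, hN p⟩⟩
  · intro a b _ _ _ hb hEE
    have hN := normalForm_of_etaEinstein hb hconstr hEE
    exact ⟨fun p => ⟨(hN p).1, (hN p).2.1⟩, fun p => Qop_xi_eq_zero (hN p).2.2⟩

/-- Theorem 5.1: an almost paracontact metric 3-dimensional Walker manifold is
η-Einstein iff `ξ₃ ≡ 0`, `f_xy² - f_xx f_yy ≡ 0`, `f_xx` vanishes nowhere, and
`ξ₂ ≡ ±1` with `ξ₁ = ∓f_xy/f_xx`; moreover in that case `a = -b = (1/2)f_xx`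
and `Qξ = 0`. -/
theorem etaEinstein_iff (f ξ₁ ξ₂ ξ₃ : Pt → ℝ)
    (hf : ContDiff ℝ (⊤ : ℕ∞) f) (h1 : ContDiff ℝ (⊤ : ℕ∞) ξ₁)
    (h2 : ContDiff ℝ (⊤ : ℕ∞) ξ₂) (h3 : ContDiff ℝ (⊤ : ℕ∞) ξ₃)
    (hconstr : ∀ p : Pt, ξ₂ p ^ 2 + f p * ξ₃ p ^ 2 + 2 * ξ₁ p * ξ₃ p = 1) :
    ((∃ a b : Pt → ℝ, ContDiff ℝ (⊤ : ℕ∞) a ∧ ContDiff ℝ (⊤ : ℕ∞) b ∧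
        (∀ p : Pt, a p ≠ 0) ∧ (∀ p : Pt, b p ≠ 0) ∧ etaEinstein f ξ₁ ξ₂ ξ₃ a b) ↔
      ((∀ p : Pt, ξ₃ p = 0) ∧ (∀ p : Pt, fxy f p ^ 2 - fxx f p * fyy f p = 0) ∧
        (∀ p : Pt, fxx f p ≠ 0) ∧
        (((∀ p : Pt, ξ₂ p = 1) ∧ (∀ p : Pt, ξ₁ p = -(fxy f p / fxx f p))) ∨
          ((∀ p : Pt, ξ₂ p = -1) ∧ (∀ p : Pt, ξ₁ p = fxy f p / fxx f p))))) ∧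
    (∀ a b : Pt → ℝ, ContDiff ℝ (⊤ : ℕ∞) a → ContDiff ℝ (⊤ : ℕ∞) b →
      (∀ p : Pt, a p ≠ 0) → (∀ p : Pt, b p ≠ 0) → etaEinstein f ξ₁ ξ₂ ξ₃ a b →
      (∀ p : Pt, a p = (1/2) * fxx f p ∧ b p = -((1/2) * fxx f p)) ∧
      (∀ p : Pt, Qop f (fun q => (ξ₁ q, ξ₂ q, ξ₃ q)) p = 0)) :=
  etaEinstein_iff_general f ξ₁ ξ₂ ξ₃ hf h2 hconstr
end

section
/- Let an almost paracontact metric Walker structure on ℝ³ be paracosymplectic, i.e. F(∂i,∂j,∂k) = 0 at every point for all coordinate fields (equivalently ∇φ = 0). Then at every point p ∈ ℝ³, either f_xx(p) = f_xy(p) = f_yy(p) = 0 (so the curvature tensor vanishes at p, the flat case), or there exist nonzero real numbers a, b with ρ(∂i,∂j)(p) = a·g(∂i,∂j)(p) + b·η(∂i)(p)η(∂j)(p) for all i,j (the η-Einstein condition at p). (Corollary 5.1: a paracosymplectic 3-dimensional Walker manifold is either flat or η-Einstein.) -/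
open Real

/-!
In coordinates, `∇φ = 0` is a first-order system prescribing every partial derivative of
`ξ₁, ξ₂, ξ₃`. Equality of the mixed partials `∂x∂z`, `∂y∂z` of `ξ₃, ξ₂, ξ₁` gives the
integrability conditions `f_xx ξ₃ = f_xy ξ₃ = f_yy ξ₃ = 0`, `f_xy ξ₂ + f_xx η(∂z) = 0` and
`f_yy ξ₂ + f_xy η(∂z) = 0`. Where `ξ₃ ≠ 0` the first three say the point is flat. Where `ξ₃ = 0`
the constraint gives `ξ₂² = 1`, so the last two give `f_xy = -f_xx ξ₁ ξ₂` and `f_yy = f_xx ξ₁²`,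
which turn `ρ` into `(f_xx / 2) (g - η ⊗ η)`: the point is η-Einstein unless `f_xx = 0`, and then
it is flat.
-/

open scoped ContDiff

section Calculus

variable {E : Type*} [NormedAddCommGroup E] [NormedSpace ℝ E] {F G : E → ℝ} {p : E}

@[fun_prop]
theorem ContDiff.fderiv_apply_const (hF : ContDiff ℝ ∞ F) (v : E) :
    ContDiff ℝ ∞ fun q => fderiv ℝ F q v :=
  (hF.fderiv_right le_rfl).clm_apply contDiff_const

theorem fderiv_fun_add_apply_of_contDiff (hF : ContDiff ℝ ∞ F) (hG : ContDiff ℝ ∞ G) (v : E) :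
    fderiv ℝ (fun q => F q + G q) p v = fderiv ℝ F p v + fderiv ℝ G p v := by
  rw [fderiv_fun_add (hF.differentiable (by simp) p) (hG.differentiable (by simp) p)]
  rfl

theorem fderiv_fun_mul_apply_of_contDiff (hF : ContDiff ℝ ∞ F) (hG : ContDiff ℝ ∞ G) (v : E) :
    fderiv ℝ (fun q => F q * G q) p v = fderiv ℝ F p v * G p + F p * fderiv ℝ G p v := by
  rw [fderiv_fun_mul (hF.differentiable (by simp) p) (hG.differentiable (by simp) p)]
  simp only [add_apply, smul_apply, smul_eq_mul]
  ring

theorem ContDiffAt.fderiv_fderiv_apply_comm {n : WithTop ℕ∞} (hF : ContDiffAt ℝ n F p)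
    (hn : 2 ≤ n) (v w : E) :
    fderiv ℝ (fun q => fderiv ℝ F q w) p v = fderiv ℝ (fun q => fderiv ℝ F q v) p w := by
  have hd : DifferentiableAt ℝ (fderiv ℝ F) p :=
    (hF.fderiv_right (m := 1) hn).differentiableAt one_ne_zero
  rw [fderiv_clm_apply hd (differentiableAt_const w),
    fderiv_clm_apply hd (differentiableAt_const v)]
  simpa using hF.isSymmSndFDerivAt (by simpa [minSmoothness_of_isRCLikeNormedField] using hn) v w

end Calculus

section Walker

variable {f ξ₁ ξ₂ ξ₃ : Pt → ℝ}

structure ParacosymplecticPDE (f ξ₁ ξ₂ ξ₃ : Pt → ℝ) : Prop where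
  pdx_ξ₁ : pdx ξ₁ = fun p => -(1/2) * pdx f p * ξ₃ p
  pdy_ξ₁ : pdy ξ₁ = fun p => -(1/2) * pdy f p * ξ₃ p
  pdz_ξ₁ : pdz ξ₁ = fun p =>
    -(1/2) * (pdz f p * ξ₃ p + pdy f p * ξ₂ p + pdx f p * ξ₁ p + f p * pdx f p * ξ₃ p)
  pdx_ξ₂ : pdx ξ₂ = 0
  pdy_ξ₂ : pdy ξ₂ = 0
  pdz_ξ₂ : pdz ξ₂ = fun p => (1/2) * pdy f p * ξ₃ p
  pdx_ξ₃ : pdx ξ₃ = 0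
  pdy_ξ₃ : pdy ξ₃ = 0
  pdz_ξ₃ : pdz ξ₃ = fun p => (1/2) * pdx f p * ξ₃ p

section
attribute [local simp] Ften gm cov phiV dd E c1 c2 c3 pdx pdy pdz

theorem paracosymplecticPDE_of_Ften_eq_zero
    (hF : ∀ (i j k : Fin 3) (p : Pt), Ften f ξ₁ ξ₂ ξ₃ (E i) (E j) (E k) p = 0) :
    ParacosymplecticPDE f ξ₁ ξ₂ ξ₃ := by
  refine ⟨?_, ?_, ?_, ?_, ?_, ?_, ?_, ?_, ?_⟩ <;> funext p
  · have h := hF 0 2 1 p; simp at h ⊢; linarith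
  · have h := hF 1 2 1 p; simp at h ⊢; linarith
  · have h := hF 2 2 1 p; simp at h ⊢; linarith
  · have h := hF 0 0 2 p; simp at h ⊢; linarith
  · have h := hF 1 0 2 p; simp at h ⊢; linarith
  · have h := hF 2 2 0 p; simp at h ⊢; linarith
  · have h := hF 0 0 1 p; simp at h ⊢; linarith
  · have h := hF 1 0 1 p; simp at h ⊢; linarith
  · have h := hF 2 0 1 p; simp at h ⊢; linarith

end

namespace ParacosymplecticPDE

variable (hS : ParacosymplecticPDE f ξ₁ ξ₂ ξ₃) (hf : ContDiff ℝ ∞ f)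
include hS hf

theorem fxx_mul_ξ₃_eq_zero (h₃ : ContDiff ℝ ∞ ξ₃) (p : Pt) : fxx f p * ξ₃ p = 0 := by
  have h : pdx (pdz ξ₃) p = pdz (pdx ξ₃) p :=
    h₃.contDiffAt.fderiv_fderiv_apply_comm (by decide) _ _
  have hx₃ : pdx ξ₃ p = 0 := congrFun hS.pdx_ξ₃ p
  rw [hS.pdz_ξ₃, hS.pdx_ξ₃] at h
  unfold fxx pdx pdz at *
  simp (disch := fun_prop) only [fderiv_fun_mul_apply_of_contDiff, fderiv_const_apply, fderiv_zero,
    Pi.zero_apply,     hx₃, zero_apply] at h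
  linear_combination 2 * h

theorem fxy_mul_ξ₃_eq_zero (h₃ : ContDiff ℝ ∞ ξ₃) (p : Pt) : fxy f p * ξ₃ p = 0 := by
  have h : pdy (pdz ξ₃) p = pdz (pdy ξ₃) p :=
    h₃.contDiffAt.fderiv_fderiv_apply_comm (by decide) _ _
  have hy₃ : pdy ξ₃ p = 0 := congrFun hS.pdy_ξ₃ p
  rw [hS.pdz_ξ₃, hS.pdy_ξ₃] at h
  unfold fxy pdx pdy pdz at *
  simp (disch := fun_prop) only [fderiv_fun_mul_apply_of_contDiff, fderiv_const_apply, fderiv_zero,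
    Pi.zero_apply,     hy₃, zero_apply] at h
  linear_combination 2 * h

theorem fyy_mul_ξ₃_eq_zero (h₂ : ContDiff ℝ ∞ ξ₂) (h₃ : ContDiff ℝ ∞ ξ₃) (p : Pt) :
    fyy f p * ξ₃ p = 0 := by
  have h : pdy (pdz ξ₂) p = pdz (pdy ξ₂) p :=
    h₂.contDiffAt.fderiv_fderiv_apply_comm (by decide) _ _
  have hy₃ : pdy ξ₃ p = 0 := congrFun hS.pdy_ξ₃ p
  rw [hS.pdz_ξ₂, hS.pdy_ξ₂] at h
  unfold fyy pdy pdz at *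
  simp (disch := fun_prop) only [fderiv_fun_mul_apply_of_contDiff, fderiv_const_apply, fderiv_zero,
    Pi.zero_apply,     hy₃, zero_apply] at h
  linear_combination 2 * h

theorem fxy_mul_ξ₂_add_fxx_mul_ηz_eq_zero (h₁ : ContDiff ℝ ∞ ξ₁) (h₂ : ContDiff ℝ ∞ ξ₂)
    (h₃ : ContDiff ℝ ∞ ξ₃) (p : Pt) : fxy f p * ξ₂ p + fxx f p * (ξ₁ p + f p * ξ₃ p) = 0 := by
  have h : pdx (pdz ξ₁) p = pdz (pdx ξ₁) p :=
    h₁.contDiffAt.fderiv_fderiv_apply_comm (by decide) _ _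
  have hxz : pdx (pdz f) p = pdz (pdx f) p :=
    hf.contDiffAt.fderiv_fderiv_apply_comm (by decide) _ _
  have hxy : pdx (pdy f) p = pdy (pdx f) p :=
    hf.contDiffAt.fderiv_fderiv_apply_comm (by decide) _ _
  have hx₁ := congrFun hS.pdx_ξ₁ p
  have hx₂ : pdx ξ₂ p = 0 := congrFun hS.pdx_ξ₂ p
  have hx₃ : pdx ξ₃ p = 0 := congrFun hS.pdx_ξ₃ p
  have hz₃ := congrFun hS.pdz_ξ₃ p
  rw [hS.pdz_ξ₁, hS.pdx_ξ₁] at h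
  unfold fxx fxy pdx pdy pdz at *
  simp (disch := fun_prop) only [fderiv_fun_mul_apply_of_contDiff, fderiv_fun_add_apply_of_contDiff,
    fderiv_const_apply, hx₁, hx₂, hx₃, hz₃, hxz, hxy, zero_apply] at h
  linear_combination -2 * h

theorem fyy_mul_ξ₂_add_fxy_mul_ηz_eq_zero (h₁ : ContDiff ℝ ∞ ξ₁) (h₂ : ContDiff ℝ ∞ ξ₂)
    (h₃ : ContDiff ℝ ∞ ξ₃) (p : Pt) : fyy f p * ξ₂ p + fxy f p * (ξ₁ p + f p * ξ₃ p) = 0 := by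
  have h : pdy (pdz ξ₁) p = pdz (pdy ξ₁) p :=
    h₁.contDiffAt.fderiv_fderiv_apply_comm (by decide) _ _
  have hyz : pdy (pdz f) p = pdz (pdy f) p :=
    hf.contDiffAt.fderiv_fderiv_apply_comm (by decide) _ _
  have hy₁ := congrFun hS.pdy_ξ₁ p
  have hy₂ : pdy ξ₂ p = 0 := congrFun hS.pdy_ξ₂ p
  have hy₃ : pdy ξ₃ p = 0 := congrFun hS.pdy_ξ₃ p
  have hz₃ := congrFun hS.pdz_ξ₃ p
  rw [hS.pdz_ξ₁, hS.pdy_ξ₁] at h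
  unfold fxy fyy pdx pdy pdz at *
  simp (disch := fun_prop) only [fderiv_fun_mul_apply_of_contDiff, fderiv_fun_add_apply_of_contDiff,
    fderiv_const_apply, hy₁, hy₂, hy₃, hz₃, hyz, zero_apply] at h
  linear_combination -2 * h

end ParacosymplecticPDE

theorem rhoT_E_eq_etaEinstein (p : Pt) (h₃ : ξ₃ p = 0) (h₂ : ξ₂ p ^ 2 = 1)
    (hxy : fxy f p = -(fxx f p * ξ₁ p * ξ₂ p)) (hyy : fyy f p = fxx f p * ξ₁ p ^ 2) (i j : Fin 3) :
    rhoT f (E i) (E j) p = fxx f p / 2 * gm f (E i) (E j) p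
      + -(fxx f p / 2) * etaV f ξ₁ ξ₂ ξ₃ (E i) p * etaV f ξ₁ ξ₂ ξ₃ (E j) p := by
  fin_cases i <;> fin_cases j <;> simp [rhoT, gm, etaV, E, c1, c2, c3, h₃, hxy, hyy] <;>
    first | ring1 | linear_combination fxx f p / 2 * h₂

end Walker

/-- Corollary 5.1: a paracosymplectic almost paracontact metric 3-dimensional Walker
manifold is, at every point, either flat or η-Einstein. -/
theorem paracosymplectic_flat_or_etaEinstein (f ξ₁ ξ₂ ξ₃ : Pt → ℝ)
    (hf : ContDiff ℝ (⊤ : ℕ∞) f) (h1 : ContDiff ℝ (⊤ : ℕ∞) ξ₁)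
    (h2 : ContDiff ℝ (⊤ : ℕ∞) ξ₂) (h3 : ContDiff ℝ (⊤ : ℕ∞) ξ₃)
    (hconstr : ∀ p : Pt, ξ₂ p ^ 2 + f p * ξ₃ p ^ 2 + 2 * ξ₁ p * ξ₃ p = 1)
    (hF : ∀ (i j k : Fin 3) (p : Pt), Ften f ξ₁ ξ₂ ξ₃ (E i) (E j) (E k) p = 0) :
    ∀ p : Pt, (fxx f p = 0 ∧ fxy f p = 0 ∧ fyy f p = 0) ∨
      ∃ a b : ℝ, a ≠ 0 ∧ b ≠ 0 ∧ ∀ i j : Fin 3,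
        rhoT f (E i) (E j) p = a * gm f (E i) (E j) p
          + b * etaV f ξ₁ ξ₂ ξ₃ (E i) p * etaV f ξ₁ ξ₂ ξ₃ (E j) p := by
  intro p
  have hS := paracosymplecticPDE_of_Ften_eq_zero hF
  by_cases h₃ : ξ₃ p = 0
  · have h₂ : ξ₂ p ^ 2 = 1 := by simpa [h₃] using hconstr p
    have hxy : fxy f p = -(fxx f p * ξ₁ p * ξ₂ p) := by
      linear_combination ξ₂ p * hS.fxy_mul_ξ₂_add_fxx_mul_ηz_eq_zero hf h1 h2 h3 p - fxy f p * h₂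
        - fxx f p * f p * ξ₂ p * h₃
    have hyy : fyy f p = fxx f p * ξ₁ p ^ 2 := by
      linear_combination ξ₂ p * hS.fyy_mul_ξ₂_add_fxy_mul_ηz_eq_zero hf h1 h2 h3 p - fyy f p * h₂
        - ξ₁ p * ξ₂ p * hxy + fxx f p * ξ₁ p ^ 2 * h₂ - fxy f p * f p * ξ₂ p * h₃
    by_cases hxx : fxx f p = 0
    · exact .inl ⟨hxx, by simpa [hxx] using hxy, by simpa [hxx] using hyy⟩
    · exact .inr ⟨fxx f p / 2, -(fxx f p / 2), by simpa using hxx, by simpa using hxx,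
        rhoT_E_eq_etaEinstein p h₃ h₂ hxy hyy⟩
  · exact .inl ⟨by simpa [h₃] using hS.fxx_mul_ξ₃_eq_zero hf h3 p,
      by simpa [h₃] using hS.fxy_mul_ξ₃_eq_zero hf h3 p,
      by simpa [h₃] using hS.fyy_mul_ξ₃_eq_zero hf h2 h3 p⟩
end
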